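/- (Alzer's inequality) Let h be a Gamma random variable with integer shape ν ≥ 1 and scale 1/ν. Then for all x > 0, P(h ≥ x) ≤ Σ_{ξ=1}^{ν} (-1)^(ξ+1) · C(ν,ξ) · exp(-ξ·ϖ·x), where ϖ = ν·(ν!)^(-1/ν) and C(ν,ξ) is the binomial coefficient. Moreover equality holds when ν = 1. -/

import Mathlib

open Real ProbabilityTheory MeasureTheory Finset Filter Topology Set

namespace AlzerAux

/-! ### Auxiliary functions -/

noncomputable def Lf (w c1 c2 : ℝ) (t : ℝ) : ℝ :=
  c1 * (Real.log (w * t) - Real.log (1 - Real.exp (-(w * t)))) - c2 * t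
noncomputable def Lf1 (w c1 c2 : ℝ) (t : ℝ) : ℝ :=
  c1 * (1/t - w * Real.exp (-(w * t)) / (1 - Real.exp (-(w * t)))) - c2
noncomputable def Lf2 (w c1 c2 : ℝ) (t : ℝ) : ℝ :=
  c1 * (-(1/t^2) + w^2 * Real.exp (-(w*t)) / (1 - Real.exp (-(w*t)))^2)

noncomputable def wc (n : ℕ) : ℝ := n * (n.factorial : ℝ) ^ (-(1:ℝ)/(n:ℝ))

noncomputable def FF (n : ℕ) (t : ℝ) : ℝ :=
  1 - Real.exp (-(n*t)) * ∑ k ∈ Finset.range n, ((n:ℝ)*t)^k / k.factorial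

noncomputable def GG (n : ℕ) (t : ℝ) : ℝ := (1 - Real.exp (-(wc n * t)))^n

noncomputable def FF' (n : ℕ) (t : ℝ) : ℝ :=
  (n:ℝ)^n / (n-1).factorial * t^(n-1) * Real.exp (-(n*t))

noncomputable def GG' (n : ℕ) (t : ℝ) : ℝ :=
  n * wc n * Real.exp (-(wc n * t)) * (1 - Real.exp (-(wc n * t)))^(n-1)

/-! ### Elementary facts -/

lemma one_sub_exp_pos' {w t : ℝ} (hw : 0 < w) (ht : 0 < t) : 0 < 1 - Real.exp (-(w*t)) := by
  have : Real.exp (-(w*t)) < 1 := by rw [Real.exp_lt_one_iff]; nlinarith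
  linarith

lemma wc_pos {n : ℕ} (hn : 1 ≤ n) : 0 < wc n := by
  have h1 : (0:ℝ) < n := by exact_mod_cast hn
  have h2 : (0:ℝ) < (n.factorial : ℝ) ^ (-(1:ℝ)/(n:ℝ)) :=
    Real.rpow_pos_of_pos (by exact_mod_cast n.factorial_pos) _
  unfold wc; positivity

lemma wc_pow {n : ℕ} (hn : 1 ≤ n) : (wc n)^n = (n:ℝ)^n / n.factorial := by
  have hn0 : (n:ℝ) ≠ 0 := by positivity
  have hf : (0:ℝ) ≤ (n.factorial : ℝ) := by positivity
  unfold wc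
  rw [mul_pow, ← Real.rpow_natCast ((n.factorial : ℝ) ^ (-(1:ℝ)/(n:ℝ))) n,
    ← Real.rpow_mul hf]
  have h3 : -(1:ℝ)/(n:ℝ) * (n:ℕ) = -1 := by field_simp
  rw [h3, Real.rpow_neg_one]
  ring

/-! ### Derivatives -/

lemma hasDerivAt_one_sub_exp (w t : ℝ) :
    HasDerivAt (fun t : ℝ => 1 - Real.exp (-(w * t))) (w * Real.exp (-(w*t))) t := by
  have h1 : HasDerivAt (fun t : ℝ => -(w * t)) (-w) t := by
    simpa using ((hasDerivAt_id t).const_mul w).fun_neg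
  have h2 := (Real.hasDerivAt_exp _).comp t h1
  simpa [mul_comm] using h2.const_sub 1

lemma hasDerivAt_GG {n : ℕ} (hn : 1 ≤ n) (t : ℝ) : HasDerivAt (GG n) (GG' n t) t := by
  have := (hasDerivAt_one_sub_exp (wc n) t).pow n
  refine this.congr_deriv ?_
  unfold GG'
  ring

lemma hasDerivAt_FF {n : ℕ} (hn : 1 ≤ n) (t : ℝ) : HasDerivAt (FF n) (FF' n t) t := by
  obtain ⟨m, rfl⟩ : ∃ m, n = m + 1 := ⟨n - 1, by omega⟩
  set n := m + 1
  have hid : HasDerivAt (fun t : ℝ => (n:ℝ) * t) (n:ℝ) t := by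
    simpa using (hasDerivAt_id t).const_mul (n:ℝ)
  have hexp : HasDerivAt (fun t : ℝ => Real.exp (-((n:ℝ) * t))) (Real.exp (-((n:ℝ)*t)) * (-(n:ℝ))) t :=
    (Real.hasDerivAt_exp _).comp t (by simpa using hid.fun_neg)
  have hS : HasDerivAt (fun t : ℝ => ∑ k ∈ Finset.range n, ((n:ℝ)*t)^k / k.factorial)
      (∑ k ∈ Finset.range n, (k:ℝ) * ((n:ℝ)*t)^(k-1) * (n:ℝ) / k.factorial) t := by
    apply HasDerivAt.fun_sum
    intro k _
    simpa [div_eq_mul_inv, mul_comm, mul_assoc, mul_left_comm] using (hid.pow k).div_const (k.factorial : ℝ)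
  have hsum : (∑ k ∈ Finset.range n, (k:ℝ) * ((n:ℝ)*t)^(k-1) * (n:ℝ) / k.factorial)
      = (n:ℝ) * ∑ k ∈ Finset.range m, ((n:ℝ)*t)^k / k.factorial := by
    rw [Finset.sum_range_succ']
    simp only [Nat.cast_zero, zero_mul, Nat.factorial_zero, Nat.cast_one, zero_div, add_zero]
    rw [Finset.mul_sum]
    apply Finset.sum_congr rfl
    intro i _
    have h5 : ((i+1).factorial : ℝ) = (i+1) * i.factorial := by
      rw [Nat.factorial_succ]; push_cast; ring
    rw [h5]
    have h1 : ((i:ℝ)+1) ≠ 0 := by positivity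
    have h2 : (i.factorial : ℝ) ≠ 0 := by positivity
    field_simp
    simp only [Nat.add_sub_cancel]; push_cast; ring
  have hmain := (hexp.mul hS).const_sub 1
  refine hmain.congr_deriv ?_
  rw [hsum, Finset.sum_range_succ]
  have hfac : ((m+1).factorial : ℝ) = (m+1) * m.factorial := by
    rw [Nat.factorial_succ]; push_cast; ring
  have h2 : (m.factorial : ℝ) ≠ 0 := by positivity
  have hpow : ((n:ℝ)*t)^m = (n:ℝ)^m * t^m := mul_pow _ _ _
  simp only [n, Nat.add_sub_cancel, hfac, hpow, FF']
  field_simp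
  ring

lemma GG'_pos {n : ℕ} (hn : 1 ≤ n) {t : ℝ} (ht : 0 < t) : 0 < GG' n t := by
  have hw := wc_pos hn
  have hE := one_sub_exp_pos' hw ht
  have hnpos : (0:ℝ) < n := by exact_mod_cast hn
  unfold GG'; positivity

/-! ### The key identity FF' = exp(L) * GG' -/

lemma FF'_eq {n : ℕ} (hn : 1 ≤ n) {t : ℝ} (ht : 0 < t) :
    FF' n t = Real.exp (Lf (wc n) ((n:ℝ)-1) ((n:ℝ) - wc n) t) * GG' n t := by
  set w := wc n with hwdef
  have hw : 0 < w := wc_pos hn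
  have hwp : w^n = (n:ℝ)^n / n.factorial := wc_pow hn
  have hE := one_sub_exp_pos' hw ht
  unfold FF' GG' Lf
  rw [← hwdef]
  obtain ⟨m, rfl⟩ : ∃ m, n = m + 1 := ⟨n - 1, by omega⟩
  have hwt : 0 < w * t := by positivity
  have hcast : ((m+1:ℕ):ℝ) - 1 = (m:ℝ) := by push_cast; ring
  rw [Real.exp_sub, hcast, mul_comm (m:ℝ), Real.exp_mul, Real.exp_sub, Real.exp_log hwt,
    Real.exp_log hE]
  rw [Real.rpow_natCast]
  have hfac : (((m+1):ℕ).factorial : ℝ) = ((m+1):ℝ) * m.factorial := by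
    rw [Nat.factorial_succ]; push_cast; ring
  have hEexp : Real.exp (-((((m+1:ℕ):ℝ))*t)) = Real.exp (-(w*t)) * Real.exp (-((((m+1:ℕ):ℝ)) - w)*t) := by
    rw [← Real.exp_add]; ring_nf
  have hne1 : (1 - Real.exp (-(w*t))) ≠ 0 := ne_of_gt hE
  have hexpne : Real.exp (-((((m+1:ℕ):ℝ)) - w)*t) ≠ 0 := Real.exp_ne_zero _
  have key : w ^ (m+1) = ((m+1:ℕ):ℝ)^(m+1) / (((m+1):ℕ).factorial : ℝ) := hwp
  simp only [Nat.add_sub_cancel]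
  rw [div_pow, hEexp]
  have hfacne : ((((m+1):ℕ)).factorial : ℝ) ≠ 0 := by positivity
  have hfmne : ((m:ℕ).factorial : ℝ) ≠ 0 := by positivity
  field_simp
  rw [hfac] at key
  have hthis : w ^ (m+1) * ((m+1:ℝ) * m.factorial) = ((m+1:ℕ):ℝ)^(m+1) := by
    rw [key]; field_simp
  have hprod : rexp ((w - ((m:ℝ)+1)) * t) * rexp ((((m:ℝ)+1) - w) * t) = 1 := by
    rw [← Real.exp_add]
    have h0 : (w - ((m:ℝ)+1)) * t + (((m:ℝ)+1) - w) * t = 0 := by ring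
    rw [h0, Real.exp_zero]
  push_cast at hthis ⊢
  have hprod' : rexp (-(t * ((m:ℝ) + 1 - w))) * rexp (t * ((m:ℝ) + 1 - w)) = 1 := by
    rw [← Real.exp_add]; simp
  linear_combination (((m:ℝ)+1)^(m+1) * t^m) * hprod' - t^m * hthis

/-! ### Concavity of L -/

lemma sq_exp_ineq {u : ℝ} (hu0 : 0 < u) : u^2 * Real.exp (-u) ≤ (1 - Real.exp (-u))^2 := by
  have hsinh : u / 2 ≤ Real.sinh (u/2) := le_of_lt ((Real.self_lt_sinh_iff).mpr (by positivity))
  have hE : Real.exp (-u) < 1 := by rw [Real.exp_lt_one_iff]; linarith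
  have hkey : u * Real.exp (-(u/2)) ≤ 1 - Real.exp (-u) := by
    have h2 : u ≤ Real.exp (u/2) - Real.exp (-(u/2)) := by
      rw [Real.sinh_eq] at hsinh
      linarith
    have h3 := mul_le_mul_of_nonneg_right h2 (Real.exp_nonneg (-(u/2)))
    calc u * Real.exp (-(u/2)) ≤ (Real.exp (u/2) - Real.exp (-(u/2))) * Real.exp (-(u/2)) := h3
      _ = 1 - Real.exp (-u) := by
          rw [sub_mul, ← Real.exp_add, ← Real.exp_add,
            show u/2 + -(u/2) = 0 by ring, show -(u/2) + -(u/2) = -u by ring, Real.exp_zero]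
  have hsplit : Real.exp (-u) = Real.exp (-(u/2)) * Real.exp (-(u/2)) := by
    rw [← Real.exp_add, show -(u/2) + -(u/2) = -u by ring]
  have h4 : (u * Real.exp (-(u/2)))^2 ≤ (1 - Real.exp (-u))^2 := by
    apply sq_le_sq' _ hkey
    have h5 : 0 ≤ u * Real.exp (-(u/2)) := by positivity
    linarith
  calc u^2 * Real.exp (-u) = (u * Real.exp (-(u/2)))^2 := by rw [hsplit]; ring
    _ ≤ _ := h4

lemma hasDerivAt_Lf {w : ℝ} (c1 c2 : ℝ) (hw : 0 < w) {t : ℝ} (ht : 0 < t) :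
    HasDerivAt (Lf w c1 c2) (Lf1 w c1 c2 t) t := by
  have hwt : 0 < w * t := by positivity
  have hE := one_sub_exp_pos' hw ht
  have hid : HasDerivAt (fun t : ℝ => w * t) w t := by simpa using (hasDerivAt_id t).const_mul w
  have hlog1 : HasDerivAt (fun t : ℝ => Real.log (w * t)) (1/t) t := by
    have := (Real.hasDerivAt_log hwt.ne').comp t hid
    refine this.congr_deriv ?_
    field_simp
  have hlog2 : HasDerivAt (fun t : ℝ => Real.log (1 - Real.exp (-(w * t))))
      (w * Real.exp (-(w*t)) / (1 - Real.exp (-(w*t)))) t := by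
    have := (Real.hasDerivAt_log hE.ne').comp t (hasDerivAt_one_sub_exp w t)
    refine this.congr_deriv ?_
    rw [div_eq_inv_mul]
  have hlin : HasDerivAt (fun t : ℝ => c2 * t) c2 t := by simpa using (hasDerivAt_id t).const_mul c2
  exact ((hlog1.sub hlog2).const_mul c1).sub hlin

lemma hasDerivAt_Lf1 {w : ℝ} (c1 c2 : ℝ) (hw : 0 < w) {t : ℝ} (ht : 0 < t) :
    HasDerivAt (Lf1 w c1 c2) (Lf2 w c1 c2 t) t := by
  have hE := one_sub_exp_pos' hw ht
  have hinv : HasDerivAt (fun t : ℝ => 1/t) (-(1/t^2)) t := by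
    simpa [one_div] using hasDerivAt_inv ht.ne'
  have hu : HasDerivAt (fun t : ℝ => w * Real.exp (-(w * t))) (-(w^2) * Real.exp (-(w*t))) t := by
    have h1 : HasDerivAt (fun t : ℝ => -(w * t)) (-w) t := by
      simpa using ((hasDerivAt_id t).const_mul w).fun_neg
    have := ((Real.hasDerivAt_exp _).comp t h1).const_mul w
    refine this.congr_deriv ?_
    ring
  have hv := hasDerivAt_one_sub_exp w t
  have hdiv := hu.div hv hE.ne'
  have hq : HasDerivAt (fun t : ℝ => w * Real.exp (-(w * t)) / (1 - Real.exp (-(w * t))))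
      (-(w^2) * Real.exp (-(w*t)) / (1 - Real.exp (-(w*t)))^2) t := by
    refine hdiv.congr_deriv ?_
    field_simp
    ring
  have := ((hinv.sub hq).const_mul c1).sub_const c2
  refine this.congr_deriv ?_
  unfold Lf2
  ring

lemma Lf2_nonpos {w c1 : ℝ} (c2 : ℝ) (hw : 0 < w) (hc1 : 0 ≤ c1) {t : ℝ} (ht : 0 < t) :
    Lf2 w c1 c2 t ≤ 0 := by
  have hE := one_sub_exp_pos' hw ht
  have hsq := sq_exp_ineq (u := w * t) (by positivity)
  have hfrac : w^2 * Real.exp (-(w*t)) / (1 - Real.exp (-(w*t)))^2 ≤ 1/t^2 := by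
    rw [div_le_div_iff₀ (by positivity) (by positivity)]
    nlinarith [hsq]
  unfold Lf2
  have : -(1/t^2) + w^2 * Real.exp (-(w*t)) / (1 - Real.exp (-(w*t)))^2 ≤ 0 := by linarith
  exact mul_nonpos_of_nonneg_of_nonpos hc1 this

lemma concave_Lf {w c1 : ℝ} (c2 : ℝ) (hw : 0 < w) (hc1 : 0 ≤ c1) :
    ConcaveOn ℝ (Ioi (0:ℝ)) (Lf w c1 c2) := by
  apply concaveOn_of_hasDerivWithinAt2_nonpos (f' := Lf1 w c1 c2) (f'' := Lf2 w c1 c2)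
    (convex_Ioi 0)
  · intro t ht
    exact (hasDerivAt_Lf c1 c2 hw ht).continuousAt.continuousWithinAt
  · intro t ht
    rw [interior_Ioi] at ht
    exact (hasDerivAt_Lf c1 c2 hw ht).hasDerivWithinAt
  · intro t ht
    rw [interior_Ioi] at ht
    exact (hasDerivAt_Lf1 c1 c2 hw ht).hasDerivWithinAt
  · intro t ht
    rw [interior_Ioi] at ht
    exact Lf2_nonpos c2 hw hc1 ht

/-! ### Limits -/

lemma slope_lim : Tendsto (fun u : ℝ => (1 - Real.exp (-u)) / u) (𝓝[≠] 0) (𝓝 1) := by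
  have h : HasDerivAt (fun u : ℝ => 1 - Real.exp (-u)) 1 0 := by
    have h1 : HasDerivAt (fun u : ℝ => -u) (-1 : ℝ) 0 := (hasDerivAt_id 0).neg
    have h2 := (Real.hasDerivAt_exp _).comp 0 h1
    have := h2.const_sub 1
    norm_num at this
    exact this
  have h' := hasDerivAt_iff_tendsto_slope.mp h
  refine h'.congr (fun u => ?_)
  simp [slope_def_field, Real.exp_zero]

lemma q_lim {w : ℝ} (hw : 0 < w) :
    Tendsto (fun t : ℝ => (1 - Real.exp (-(w * t))) / (w * t)) (𝓝[>] (0:ℝ)) (𝓝 1) := by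
  have hmap : Tendsto (fun t : ℝ => w * t) (𝓝[>] (0:ℝ)) (𝓝[≠] 0) := by
    apply tendsto_nhdsWithin_of_tendsto_nhds_of_eventually_within
    · have : Tendsto (fun t : ℝ => w * t) (𝓝 (0:ℝ)) (𝓝 (w * 0)) :=
        (continuous_const.mul continuous_id).tendsto 0
      simpa using this.mono_left nhdsWithin_le_nhds
    · filter_upwards [self_mem_nhdsWithin] with t ht
      exact ne_of_gt (mul_pos hw ht)
  exact slope_lim.comp hmap

lemma L_lim {w : ℝ} (c1 c2 : ℝ) (hw : 0 < w) :
    Tendsto (Lf w c1 c2) (𝓝[>] (0:ℝ)) (𝓝 0) := by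
  have hlog : Tendsto (fun t : ℝ => Real.log ((1 - Real.exp (-(w * t))) / (w * t)))
      (𝓝[>] (0:ℝ)) (𝓝 0) := by
    have := (Real.continuousAt_log (by norm_num : (1:ℝ) ≠ 0)).tendsto.comp (q_lim hw)
    simpa [Function.comp_def] using this
  have heq : ∀ t ∈ Ioi (0:ℝ),
      Lf w c1 c2 t = -c1 * Real.log ((1 - Real.exp (-(w * t))) / (w * t)) - c2 * t := by
    intro t ht
    have ht : 0 < t := ht
    have hwt : 0 < w * t := by positivity
    have hE := one_sub_exp_pos' hw ht
    unfold Lf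
    rw [Real.log_div hE.ne' hwt.ne']
    ring
  have hmain : Tendsto (fun t : ℝ => -c1 * Real.log ((1 - Real.exp (-(w * t))) / (w * t)) - c2 * t)
      (𝓝[>] (0:ℝ)) (𝓝 0) := by
    have h1 := hlog.const_mul (-c1)
    have h2 : Tendsto (fun t : ℝ => c2 * t) (𝓝[>] (0:ℝ)) (𝓝 0) := by
      have : Tendsto (fun t : ℝ => c2 * t) (𝓝 (0:ℝ)) (𝓝 (c2 * 0)) :=
        (continuous_const.mul continuous_id).tendsto 0
      simpa using this.mono_left nhdsWithin_le_nhds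
    simpa using h1.sub h2
  exact hmain.congr' (by filter_upwards [self_mem_nhdsWithin] with t ht using (heq t ht).symm)

lemma tendsto_FF_top {n : ℕ} (hn : 1 ≤ n) : Tendsto (FF n) atTop (𝓝 1) := by
  have hnpos : (0:ℝ) < n := by exact_mod_cast hn
  have hmap : Tendsto (fun t : ℝ => (n:ℝ) * t) atTop atTop :=
    Tendsto.const_mul_atTop hnpos tendsto_id
  have hterm : ∀ k : ℕ, Tendsto (fun t : ℝ => Real.exp (-((n:ℝ)*t)) * ((n:ℝ)*t)^k / k.factorial)
      atTop (𝓝 0) := by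
    intro k
    have h1 : Tendsto (fun s : ℝ => s^k * Real.exp (-s)) atTop (𝓝 0) :=
      tendsto_pow_mul_exp_neg_atTop_nhds_zero k
    have h2 := (h1.comp hmap).div_const (k.factorial : ℝ)
    simpa [Function.comp, mul_comm, zero_div] using h2
  have hsum : Tendsto (fun t : ℝ => ∑ k ∈ Finset.range n,
      Real.exp (-((n:ℝ)*t)) * (((n:ℝ)*t)^k / k.factorial)) atTop (𝓝 0) := by
    have := tendsto_finset_sum (Finset.range n)
      (fun k _ => by simpa [mul_div_assoc] using hterm k)
    simpa using this
  have := hsum.const_sub 1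
  simp only [sub_zero] at this
  refine this.congr (fun t => ?_)
  unfold FF
  rw [Finset.mul_sum]

lemma tendsto_GG_top {n : ℕ} (hn : 1 ≤ n) : Tendsto (GG n) atTop (𝓝 1) := by
  have hw := wc_pos hn
  have hmap : Tendsto (fun t : ℝ => -(wc n * t)) atTop atBot :=
    tendsto_neg_atBot_iff.mpr (Tendsto.const_mul_atTop hw tendsto_id)
  have hexp : Tendsto (fun t : ℝ => Real.exp (-(wc n * t))) atTop (𝓝 0) :=
    Real.tendsto_exp_atBot.comp hmap
  have h1 : Tendsto (fun t : ℝ => 1 - Real.exp (-(wc n * t))) atTop (𝓝 1) := by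
    simpa using hexp.const_sub 1
  have := h1.pow n
  rw [one_pow] at this
  exact this

lemma FF_zero {n : ℕ} (hn : 1 ≤ n) : FF n 0 = 0 := by
  obtain ⟨m, rfl⟩ : ∃ m, n = m + 1 := ⟨n - 1, by omega⟩
  unfold FF
  rw [Finset.sum_range_succ']
  simp

lemma GG_zero {n : ℕ} (hn : 1 ≤ n) : GG n 0 = 0 := by
  unfold GG
  rw [mul_zero, neg_zero, Real.exp_zero, sub_self]
  exact zero_pow (by omega)

/-! ### Concave slope lemma -/

lemma concave_nonpos_of (f : ℝ → ℝ) (hconc : ConcaveOn ℝ (Ioi (0:ℝ)) f)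
    (hlim : Tendsto f (𝓝[>] 0) (𝓝 0)) {a t : ℝ} (ha : 0 < a) (hfa : f a < 0) (hat : a ≤ t) :
    f t ≤ 0 := by
  rcases eq_or_lt_of_le hat with rfl | hlt
  · exact hfa.le
  · have ht : 0 < t := lt_trans ha hlt
    have key : a / t * f t ≤ f a := by
      have hev : ∀ᶠ ε in 𝓝[>] (0:ℝ), ε < a ∧
          (t - a)/(t - ε) * f ε + (1 - (t - a)/(t - ε)) * f t ≤ f a := by
        filter_upwards [self_mem_nhdsWithin,
          Ioo_mem_nhdsGT_of_mem (by constructor <;> linarith : (0:ℝ) ∈ Ico 0 a)] with ε hε hεa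
        have hε0 : 0 < ε := hε
        have hεa' : ε < a := hεa.2
        refine ⟨hεa', ?_⟩
        have hden : 0 < t - ε := by linarith
        set lam := (t - a)/(t - ε) with hlam
        have hlam0 : 0 ≤ lam := div_nonneg (by linarith) hden.le
        have hlam1 : lam < 1 := by
          rw [hlam, div_lt_one hden]; linarith
        have hcomb := hconc.2 (mem_Ioi.mpr hε0) (mem_Ioi.mpr ht) hlam0
          (by linarith : (0:ℝ) ≤ 1 - lam) (by ring)
        have hpt : lam • ε + (1 - lam) • t = a := by
          simp only [smul_eq_mul]
          rw [hlam]
          field_simp [hden.ne']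
          ring
        rw [hpt] at hcomb
        simpa [smul_eq_mul] using hcomb
      have htend : Tendsto (fun ε => (t - a)/(t - ε) * f ε + (1 - (t - a)/(t - ε)) * f t)
          (𝓝[>] (0:ℝ)) (𝓝 ((t - a)/t * 0 + (1 - (t - a)/t) * f t)) := by
        have hc : Tendsto (fun ε : ℝ => (t - a)/(t - ε)) (𝓝[>] (0:ℝ)) (𝓝 ((t - a)/t)) := by
          have : ContinuousAt (fun ε : ℝ => (t - a)/(t - ε)) 0 := by
            apply ContinuousAt.div continuousAt_const (continuousAt_const.sub continuousAt_id)
            simpa using ht.ne'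
          simpa using this.tendsto.mono_left nhdsWithin_le_nhds
        exact (hc.mul hlim).add ((hc.const_sub 1).mul_const (f t))
      have hle := le_of_tendsto htend (by filter_upwards [hev] with ε h using h.2)
      have heq2 : (t - a)/t * 0 + (1 - (t - a)/t) * f t = a/t * f t := by
        field_simp
        ring
      linarith [heq2 ▸ hle]
    by_contra hpos
    push_neg at hpos
    have h1 : 0 < a / t := by positivity
    nlinarith

/-! ### Key inequality -/

theorem key {n : ℕ} (hn : 1 ≤ n) {x : ℝ} (hx : 0 < x) : GG n x ≤ FF n x := by
  set w := wc n with hwdef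
  have hw : 0 < w := wc_pos hn
  have hc1 : (0:ℝ) ≤ (n:ℝ) - 1 := by
    have : (1:ℝ) ≤ n := by exact_mod_cast hn
    linarith
  set c2 := (n:ℝ) - w with hc2def
  set Ln := Lf w ((n:ℝ)-1) c2 with hLdef
  have hD : ∀ t : ℝ, HasDerivAt (fun t => FF n t - GG n t) (FF' n t - GG' n t) t :=
    fun t => (hasDerivAt_FF hn t).sub (hasDerivAt_GG hn t)
  by_cases hcase : ∀ t ∈ Ioc (0:ℝ) x, 0 ≤ Ln t
  · -- monotone on [0, x]
    have hmono : MonotoneOn (fun t => FF n t - GG n t) (Icc 0 x) := by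
      apply monotoneOn_of_deriv_nonneg (convex_Icc 0 x)
      · exact (Continuous.sub
          (continuous_iff_continuousAt.mpr (fun t => (hasDerivAt_FF hn t).continuousAt))
          (continuous_iff_continuousAt.mpr (fun t => (hasDerivAt_GG hn t).continuousAt))).continuousOn
      · intro t ht
        exact ((hD t).differentiableAt).differentiableWithinAt
      · intro t ht
        rw [interior_Icc] at ht
        rw [(hD t).deriv]
        have htpos : 0 < t := ht.1
        have hLt : 0 ≤ Ln t := hcase t ⟨ht.1, ht.2.le⟩
        have hFFeq := FF'_eq hn htpos
        rw [← hwdef, ← hc2def, ← hLdef] at hFFeq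
        have hG := GG'_pos hn htpos
        have : (1:ℝ) ≤ Real.exp (Ln t) := by
          rw [← Real.exp_zero]
          exact Real.exp_le_exp.mpr hLt
        nlinarith [hFFeq]
    have h0 : FF n 0 - GG n 0 = 0 := by rw [FF_zero hn, GG_zero hn]; ring
    have h1 : FF n 0 - GG n 0 ≤ FF n x - GG n x :=
      hmono (left_mem_Icc.mpr hx.le) (right_mem_Icc.mpr hx.le) hx.le
    linarith
  · push_neg at hcase
    obtain ⟨x₀, hx₀mem, hx₀neg⟩ := hcase
    have hLconc : ConcaveOn ℝ (Ioi (0:ℝ)) Ln := concave_Lf c2 hw hc1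
    have hLlim : Tendsto Ln (𝓝[>] 0) (𝓝 0) := L_lim _ _ hw
    have hLneg : ∀ t, x ≤ t → Ln t ≤ 0 := by
      intro t hxt
      exact concave_nonpos_of Ln hLconc hLlim hx₀mem.1 hx₀neg (le_trans hx₀mem.2 hxt)
    have hanti : AntitoneOn (fun t => FF n t - GG n t) (Ici x) := by
      apply antitoneOn_of_deriv_nonpos (convex_Ici x)
      · exact (Continuous.sub
          (continuous_iff_continuousAt.mpr (fun t => (hasDerivAt_FF hn t).continuousAt))
          (continuous_iff_continuousAt.mpr (fun t => (hasDerivAt_GG hn t).continuousAt))).continuousOn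
      · intro t ht
        exact ((hD t).differentiableAt).differentiableWithinAt
      · intro t ht
        rw [interior_Ici] at ht
        rw [(hD t).deriv]
        have htpos : 0 < t := lt_trans hx ht
        have hLt : Ln t ≤ 0 := hLneg t (le_of_lt ht)
        have hFFeq := FF'_eq hn htpos
        rw [← hwdef, ← hc2def, ← hLdef] at hFFeq
        have hG := GG'_pos hn htpos
        have : Real.exp (Ln t) ≤ 1 := by
          rw [← Real.exp_zero]
          exact Real.exp_le_exp.mpr hLt
        nlinarith [hFFeq]
    have hDlim : Tendsto (fun t => FF n t - GG n t) atTop (𝓝 0) := by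
      have := (tendsto_FF_top hn).sub (tendsto_GG_top hn)
      simpa using this
    have hge : ∀ᶠ t in atTop, FF n t - GG n t ≤ FF n x - GG n x := by
      filter_upwards [eventually_ge_atTop x] with t hxt
      exact hanti (self_mem_Ici) hxt hxt
    have := le_of_tendsto hDlim hge
    linarith

/-! ### ccdf formula -/

theorem ccdf_eq {n : ℕ} (hn : 1 ≤ n) {x : ℝ} (hx : 0 < x) :
    ((gammaMeasure n n) {y : ℝ | x ≤ y}).toReal = 1 - FF n x := by
  have hnpos : (0:ℝ) < n := by exact_mod_cast hn
  have hset : {y : ℝ | x ≤ y} = Ici x := rfl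
  have hFF'nonneg : ∀ y ∈ Ioi x, 0 ≤ FF' n y := by
    intro y hy
    have hy' : 0 < y := lt_trans hx hy
    unfold FF'
    positivity
  have hFTC := integral_Ioi_of_hasDerivAt_of_nonneg' (a := x)
    (fun y _ => hasDerivAt_FF hn y) hFF'nonneg (tendsto_FF_top hn)
  have hInt : IntegrableOn (FF' n) (Ioi x) :=
    integrableOn_Ioi_deriv_of_nonneg' (fun y _ => hasDerivAt_FF hn y) hFF'nonneg
      (tendsto_FF_top hn)
  have hpdf : ∀ y ∈ Ioi x, gammaPDF (n:ℝ) (n:ℝ) y = ENNReal.ofReal (FF' n y) := by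
    intro y hy
    have hy' : 0 < y := lt_trans hx hy
    rw [gammaPDF_of_nonneg hy'.le]
    congr 1
    have h1 : (n:ℝ)^(n:ℝ) = (n:ℝ)^n := Real.rpow_natCast _ n
    have h2 : Real.Gamma (n:ℝ) = ((n-1).factorial : ℝ) := by
      have h2' : (n:ℝ) = ((n-1 : ℕ) : ℝ) + 1 := by
        rw [Nat.cast_sub hn]; push_cast; ring
      rw [h2', Real.Gamma_nat_eq_factorial]
    have h3 : y ^ ((n:ℝ)-1) = y ^ (n-1 : ℕ) := by
      have h3' : (n:ℝ) - 1 = ((n-1 : ℕ) : ℝ) := by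
        rw [Nat.cast_sub hn]; push_cast; ring
      rw [h3', Real.rpow_natCast]
    rw [h1, h2, h3]
    rfl
  rw [hset, gammaMeasure, withDensity_apply _ measurableSet_Ici]
  rw [← setLIntegral_congr (Ioi_ae_eq_Ici (a := x))]
  rw [setLIntegral_congr_fun measurableSet_Ioi hpdf]
  rw [← ofReal_integral_eq_lintegral_ofReal hInt
    (ae_restrict_of_forall_mem measurableSet_Ioi hFF'nonneg)]
  rw [hFTC]
  rw [ENNReal.toReal_ofReal]
  have h5 : 0 ≤ ∑ k ∈ Finset.range n, ((n:ℝ)*x)^k / k.factorial := by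
    apply Finset.sum_nonneg
    intro k _
    positivity
  have h6 : 0 ≤ Real.exp (-((n:ℝ)*x)) * ∑ k ∈ Finset.range n, ((n:ℝ)*x)^k / k.factorial := by
    positivity
  unfold FF
  linarith

/-! ### RHS formula -/

theorem rhs_eq {n : ℕ} (hn : 1 ≤ n) (x : ℝ) :
    ∑ ξ ∈ Finset.Icc 1 n, (-1 : ℝ) ^ (ξ + 1) * (n.choose ξ) *
        Real.exp (-(ξ * (n * ((n.factorial : ℝ) ^ (-(1 : ℝ) / n))) * x)) = 1 - GG n x := by
  have hE : ∀ ξ : ℕ, Real.exp (-((ξ:ℝ) * wc n * x)) = (Real.exp (-(wc n * x)))^ξ := by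
    intro ξ
    rw [← Real.exp_nat_mul]
    ring_nf
  set E := Real.exp (-(wc n * x)) with hEdef
  have hbin : (1 - E)^n = ∑ k ∈ Finset.range (n+1), (-E)^k * 1^(n-k) * (n.choose k) := by
    rw [show (1 : ℝ) - E = -E + 1 by ring, add_pow]
  have hsplit : Finset.range (n+1) = insert 0 (Finset.Icc 1 n) := by
    ext k
    simp [Nat.lt_succ_iff]
    omega
  have hGG : GG n x = (1 - E)^n := rfl
  have hwc : ∀ ξ : ℕ, -((ξ:ℝ) * ((n:ℝ) * ((n.factorial : ℝ) ^ (-(1 : ℝ) / (n:ℝ)))) * x)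
      = -((ξ:ℝ) * wc n * x) := by
    intro ξ
    unfold wc
    ring
  rw [hGG, hbin, hsplit, Finset.sum_insert (by simp)]
  simp only [pow_zero, one_pow, Nat.choose_zero_right, Nat.cast_one, mul_one, one_mul]
  have hterm : ∀ ξ ∈ Finset.Icc 1 n, (-1:ℝ)^(ξ+1) * (n.choose ξ) *
      Real.exp (-((ξ:ℝ) * ((n:ℝ) * ((n.factorial : ℝ) ^ (-(1 : ℝ) / (n:ℝ)))) * x))
      = -((-E)^ξ * (n.choose ξ)) := by
    intro ξ _
    rw [hwc ξ, hE ξ, neg_pow, pow_succ]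
    ring
  rw [Finset.sum_congr rfl hterm, Finset.sum_neg_distrib]
  ring

end AlzerAux

/-- Alzer's inequality: if `h ~ Gamma(ν, 1/ν)` (integer shape `ν ≥ 1`, rate `ν`), then for
`x > 0`, `P(h ≥ x) ≤ ∑_{ξ=1}^{ν} (-1)^(ξ+1) C(ν,ξ) exp(-ξ ϖ x)` with `ϖ = ν (ν!)^(-1/ν)`,
with equality when `ν = 1`. -/
theorem alzer_gamma_ccdf_bound (ν : ℕ) (hν : 1 ≤ ν) (x : ℝ) (hx : 0 < x) :
    (((gammaMeasure ν ν) {y : ℝ | x ≤ y}).toReal ≤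
      ∑ ξ ∈ Finset.Icc 1 ν, (-1 : ℝ) ^ (ξ + 1) * (ν.choose ξ) *
        Real.exp (-(ξ * (ν * ((ν.factorial : ℝ) ^ (-(1 : ℝ) / ν))) * x))) ∧
    (ν = 1 →
      ((gammaMeasure ν ν) {y : ℝ | x ≤ y}).toReal =
        ∑ ξ ∈ Finset.Icc 1 ν, (-1 : ℝ) ^ (ξ + 1) * (ν.choose ξ) *
          Real.exp (-(ξ * (ν * ((ν.factorial : ℝ) ^ (-(1 : ℝ) / ν))) * x))) := by
  constructor
  · rw [AlzerAux.ccdf_eq hν hx, AlzerAux.rhs_eq hν x]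
    have := AlzerAux.key hν hx
    linarith
  · intro h
    subst h
    rw [AlzerAux.ccdf_eq hν hx, AlzerAux.rhs_eq hν x]
    have : AlzerAux.GG 1 x = AlzerAux.FF 1 x := by
      unfold AlzerAux.GG AlzerAux.FF AlzerAux.wc
      norm_num
    rw [this]
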